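/- Let $X \sim \mathrm{Bin}(m, \alpha \log(m)/m)$ and $W \sim \mathrm{Bin}(m, \beta \log(m)/m)$ be independent, with constants $\alpha > \beta > 0$ satisfying $\sqrt{\alpha} - \sqrt{\beta} < 1$. Then $\mathbb{P}(X - W \leq 0) \geq m^{-1+\Omega(1)}$; i.e., there exists $\epsilon > 0$ such that for all sufficiently large $m$, $\mathbb{P}(X \leq W) \geq m^{-1+\epsilon}$. -/

import Mathlib

open Finset Real

/-- The probability mass function of a binomial random variable with
parameters `m` and `p`, evaluated at `j`. -/
noncomputable def binomPMF (m : ℕ) (p : ℝ) (j : ℕ) : ℝ :=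
  (m.choose j : ℝ) * p ^ j * (1 - p) ^ (m - j)

/-!
`P(X ≤ W) ≥ P(X = k) P(W = k)` with `k = ⌈√(αβ) log m⌉`. Both binomials are in the Poisson regime,
where `P(Bin(m, a log m / m) = κ log m) ≥ m ^ (κ (log (a / κ) + 1) - a - o(1))`: bound the binomial
coefficient below by `(m - k) ^ k / k!`, the factorial above by Stirling's bound
`k! ≤ e √k (k / e) ^ k`, and `(1 - p) ^ m` below by `exp (-m p / (1 - p))`. For `κ = √(αβ)` the two
exponents add up to `2 √(αβ) - α - β = -(√α - √β) ^ 2 > -1`.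
-/

open Filter Topology
open scoped Nat

theorem Real.log_factorial_le {n : ℕ} (hn : n ≠ 0) :
    log n ! ≤ n * (log n - 1) + log n / 2 + 1 := by
  obtain ⟨k, rfl⟩ := Nat.exists_eq_add_one_of_ne_zero hn
  have h := Stirling.log_stirlingSeq'_antitone (Nat.zero_le k)
  simp only [Function.comp_apply, Stirling.log_stirlingSeq_formula] at h
  rw [log_mul two_ne_zero (by positivity), log_div (by positivity) (exp_ne_zero 1)] at h
  norm_num [log_exp, log_div, log_sqrt] at h
  push_cast
  linarith

theorem sub_pow_le_choose_mul_factorial {m k : ℕ} (hkm : k ≤ m) :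
    ((m : ℝ) - k) ^ k ≤ m.choose k * k ! := by
  have h : (m - k) ^ k ≤ m.choose k * k ! := by
    rw [mul_comm, ← Nat.descFactorial_eq_factorial_mul_choose]
    exact (Nat.pow_le_pow_left (by omega) k).trans (Nat.pow_sub_le_descFactorial m k)
  rw [← Nat.cast_sub hkm]
  exact_mod_cast h

theorem binomPMF_nonneg {m j : ℕ} {p : ℝ} (hp0 : 0 ≤ p) (hp1 : p ≤ 1) : 0 ≤ binomPMF m p j := by
  have : 0 ≤ 1 - p := sub_nonneg.mpr hp1
  unfold binomPMF
  positivity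

theorem binomPMF_pos {m k : ℕ} {p : ℝ} (hp0 : 0 < p) (hp1 : p < 1) (hkm : k ≤ m) :
    0 < binomPMF m p k := by
  have : (0 : ℝ) < m.choose k := by exact_mod_cast Nat.choose_pos hkm
  have : 0 < 1 - p := sub_pos.mpr hp1
  unfold binomPMF
  positivity

theorem binomPMF_of_lt {m k : ℕ} (hmk : m < k) (p : ℝ) : binomPMF m p k = 0 := by
  simp [binomPMF, Nat.choose_eq_zero_of_lt hmk]

theorem binomPMF_mul_le_sum_ite {m k : ℕ} {p q : ℝ} (hp0 : 0 ≤ p) (hp1 : p ≤ 1)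
    (hq0 : 0 ≤ q) (hq1 : q ≤ 1) :
    binomPMF m p k * binomPMF m q k ≤ ∑ x ∈ range (m + 1), ∑ w ∈ range (m + 1),
      if x ≤ w then binomPMF m p x * binomPMF m q w else 0 := by
  have hterm (x w : ℕ) : 0 ≤ if x ≤ w then binomPMF m p x * binomPMF m q w else 0 := by
    split_ifs
    exacts [mul_nonneg (binomPMF_nonneg hp0 hp1) (binomPMF_nonneg hq0 hq1), le_rfl]
  rcases le_or_gt k m with hkm | hmk
  · have hk : k ∈ range (m + 1) := mem_range.mpr (Nat.lt_succ_of_le hkm)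
    calc binomPMF m p k * binomPMF m q k
        = if k ≤ k then binomPMF m p k * binomPMF m q k else 0 := (if_pos le_rfl).symm
      _ ≤ ∑ w ∈ range (m + 1), if k ≤ w then binomPMF m p k * binomPMF m q w else 0 :=
        single_le_sum (fun w _ => hterm k w) hk
      _ ≤ _ := single_le_sum (f := fun x => ∑ w ∈ range (m + 1), _)
        (fun x _ => sum_nonneg fun w _ => hterm x w) hk
  · rw [binomPMF_of_lt hmk, zero_mul]
    exact sum_nonneg fun x _ => sum_nonneg fun w _ => hterm x w

theorem le_log_binomPMF {m k : ℕ} {p : ℝ} (hp0 : 0 < p) (hp1 : p < 1) (hk : k ≠ 0)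
    (hkm : k < m) :
    k * (log ((m - k) * p / k) + 1) - log k / 2 - 1 - m * p / (1 - p) ≤
      log (binomPMF m p k) := by
  have hmk : (0 : ℝ) < m - k := sub_pos.mpr (by exact_mod_cast hkm)
  have hk0 : (0 : ℝ) < k := by positivity
  have h1p : 0 < 1 - p := sub_pos.mpr hp1
  have hchoose0 : (0 : ℝ) < m.choose k := by exact_mod_cast Nat.choose_pos hkm.le
  have hchoose : k * log (m - k) ≤ log (m.choose k) + log k ! := by
    rw [← Real.log_pow, ← log_mul (by positivity) (by positivity)]
    exact log_le_log (by positivity) (sub_pow_le_choose_mul_factorial hkm.le)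
  have hlog1p : -(p / (1 - p)) ≤ log (1 - p) := by
    have := one_sub_inv_le_log_of_pos h1p
    rwa [show 1 - (1 - p)⁻¹ = -(p / (1 - p)) by field_simp; ring] at this
  have hpow : m * log (1 - p) ≤ (m - k : ℕ) * log (1 - p) :=
    mul_le_mul_of_nonpos_right (by exact_mod_cast Nat.sub_le m k)
      (log_nonpos h1p.le (by linarith))
  have hexp : -(m * p / (1 - p)) ≤ m * log (1 - p) := by
    rw [mul_div_assoc, ← mul_neg]
    exact mul_le_mul_of_nonneg_left hlog1p m.cast_nonneg
  have hpmf : log (binomPMF m p k) =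
      log (m.choose k) + k * log p + (m - k : ℕ) * log (1 - p) := by
    rw [binomPMF, log_mul (by positivity) (by positivity), log_mul (by positivity) (by positivity),
      Real.log_pow, Real.log_pow]
  have hratio : log ((m - k) * p / k) = log (m - k) + log p - log k := by
    rw [log_div (by positivity) hk0.ne', log_mul hmk.ne' hp0.ne']
  rw [hpmf, hratio]
  linarith [Real.log_factorial_le hk]

theorem Real.tendsto_log_div_self_atTop : Tendsto (fun x : ℝ => log x / x) atTop (𝓝 0) := by
  simpa using tendsto_pow_log_div_mul_add_atTop 1 0 1 one_ne_zero

theorem tendsto_const_mul_log_div_natCast (a : ℝ) :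
    Tendsto (fun m : ℕ => a * log m / m) atTop (𝓝 0) := by
  simpa [mul_div_assoc] using
    (tendsto_log_div_self_atTop.comp tendsto_natCast_atTop_atTop).const_mul a

theorem tendsto_natCeil_mul_log_div_log {c : ℝ} (hc : 0 < c) :
    Tendsto (fun m : ℕ => (⌈c * log m⌉₊ : ℝ) / log m) atTop (𝓝 c) := by
  have hL : Tendsto (fun m : ℕ => log m) atTop atTop :=
    tendsto_log_atTop.comp tendsto_natCast_atTop_atTop
  simpa using ((tendsto_nat_ceil_div_atTop.comp (hL.const_mul_atTop hc)).mul_const c).congr'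
    ((hL.eventually_gt_atTop 0).mono fun m hm => by simp only [Function.comp_apply]; field_simp)

/-- `P(Poi(a L) = κ L) = exp (L · poissonExponent a κ + O(log L))` as `L → ∞`. -/
noncomputable def poissonExponent (a κ : ℝ) : ℝ :=
  κ * (log (a / κ) + 1) - a

theorem poissonExponent_add_poissonExponent_sqrt_mul_sqrt {α β : ℝ} (hα : 0 < α) (hβ : 0 < β) :
    poissonExponent α (√α * √β) + poissonExponent β (√α * √β) = -(√α - √β) ^ 2 := by
  have hlog : log (α / (√α * √β)) + log (β / (√α * √β)) = 0 := by
    rw [← log_mul (by positivity) (by positivity)]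
    have : α / (√α * √β) * (β / (√α * √β)) = 1 := by
      field_simp
      rw [sq_sqrt hα.le, sq_sqrt hβ.le]
    simp [this]
  unfold poissonExponent
  linear_combination √α * √β * hlog + sq_sqrt hα.le + sq_sqrt hβ.le

theorem eventually_rpow_le_binomPMF {a κ r : ℝ} (ha : 0 < a) (hκ : 0 < κ) {k : ℕ → ℕ}
    (hk : Tendsto (fun m => (k m : ℝ) / log m) atTop (𝓝 κ))
    (hr : r < poissonExponent a κ) :
    ∀ᶠ m : ℕ in atTop, (m : ℝ) ^ r ≤ binomPMF m (a * log m / m) (k m) := by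
  have hL : Tendsto (fun m : ℕ => log m) atTop atTop :=
    tendsto_log_atTop.comp tendsto_natCast_atTop_atTop
  have hL0 : ∀ᶠ m : ℕ in atTop, 0 < log m := hL.eventually_gt_atTop 0
  have hp := tendsto_const_mul_log_div_natCast a
  have hk_top : Tendsto (fun m => (k m : ℝ)) atTop atTop :=
    (hk.pos_mul_atTop hκ hL).congr' <| hL0.mono fun m hm => div_mul_cancel₀ _ hm.ne'
  have hk_div : Tendsto (fun m : ℕ => (k m : ℝ) / m) atTop (𝓝 0) := by
    simpa using (hk.mul (tendsto_const_mul_log_div_natCast 1)).congr'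
      (hL0.mono fun m hm => by rw [one_mul, div_mul_div_cancel₀ hm.ne'])
  have hk0 : ∀ᶠ m in atTop, (0 : ℝ) < k m := hk_top.eventually_gt_atTop 0
  have hlogk : Tendsto (fun m => log (k m) / log m) atTop (𝓝 0) := by
    simpa using ((tendsto_log_div_self_atTop.comp hk_top).mul hk).congr'
      (hk0.mono fun m hm => div_mul_div_cancel₀ hm.ne')
  have hrate : Tendsto (fun m : ℕ =>
      (k m / log m) * (log ((1 - k m / m) * a / (k m / log m)) + 1)
        - log (k m) / log m / 2 - 1 / log m - a / (1 - a * log m / m)) atTop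
      (𝓝 (poissonExponent a κ)) := by
    have hratio := (((tendsto_const_nhds (x := (1 : ℝ))).sub hk_div).mul_const a).div hk hκ.ne'
    have hlog_ratio := (hratio.log (by simp [ha.ne', hκ.ne'])).add_const 1
    simpa [poissonExponent] using
      (((hk.mul hlog_ratio).sub (hlogk.div_const 2)).sub hL.inv_tendsto_atTop).sub
        ((tendsto_const_nhds (x := a)).div ((tendsto_const_nhds (x := (1 : ℝ))).sub hp) (by simp))
  filter_upwards [hL0, hk0, hp.eventually_lt_const one_pos, hk_div.eventually_lt_const one_pos,
    eventually_gt_atTop 0, hrate.eventually_const_lt hr] with m hLm hkm0 hp1 hkm_div hm hr_lt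
  have hm : (0 : ℝ) < m := by exact_mod_cast hm
  have hk_lt : k m < m := by exact_mod_cast (div_lt_one hm).mp hkm_div
  have hp0 : 0 < a * log m / m := by positivity
  rw [rpow_def_of_pos hm, ← le_log_iff_exp_le (binomPMF_pos hp0 hp1 hk_lt.le)]
  refine le_trans ?_ (le_log_binomPMF hp0 hp1 (by exact_mod_cast hkm0.ne') hk_lt)
  have harg : (m - k m) * (a * log m / m) / k m = (1 - k m / m) * a / (k m / log m) := by
    field_simp
  have h1p : 1 - a * log m / m ≠ 0 := (sub_pos.mpr hp1).ne'
  rw [harg]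
  have := mul_lt_mul_of_pos_right hr_lt hLm
  field_simp at this ⊢
  linarith

theorem stmt_9 (α β : ℝ) (hβ : 0 < β) (hαβ : β < α)
    (hthr : Real.sqrt α - Real.sqrt β < 1) :
    ∃ ε > (0 : ℝ), ∃ M : ℕ, ∀ m ≥ M,
      (∑ x ∈ Finset.range (m + 1), ∑ w ∈ Finset.range (m + 1),
          if x ≤ w then
            binomPMF m (α * Real.log m / m) x * binomPMF m (β * Real.log m / m) w
          else 0)
        ≥ (m : ℝ) ^ (-1 + ε) := by
  have hα : 0 < α := hβ.trans hαβ
  set c := √α * √β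
  have hc : 0 < c := by positivity
  have hexponents := poissonExponent_add_poissonExponent_sqrt_mul_sqrt hα hβ
  set ε := (1 - (√α - √β) ^ 2) / 2 with hε_def
  have hε : 0 < ε := by nlinarith [sqrt_le_sqrt hαβ.le]
  have hk := tendsto_natCeil_mul_log_div_log hc
  have hX := eventually_rpow_le_binomPMF hα hc hk (r := poissonExponent α c - ε / 2) (by linarith)
  have hW := eventually_rpow_le_binomPMF hβ hc hk (r := poissonExponent β c - ε / 2) (by linarith)
  refine ⟨ε, hε, eventually_atTop.mp ?_⟩
  filter_upwards [hX, hW, (tendsto_const_mul_log_div_natCast α).eventually_le_const one_pos,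
    (tendsto_const_mul_log_div_natCast β).eventually_le_const one_pos, eventually_gt_atTop 0]
    with m hXm hWm hp1 hq1 hm
  calc (m : ℝ) ^ (-1 + ε)
      = (m : ℝ) ^ (poissonExponent α c - ε / 2) * (m : ℝ) ^ (poissonExponent β c - ε / 2) := by
        rw [← rpow_add (by positivity)]
        congr 1
        linarith
    _ ≤ _ := mul_le_mul hXm hWm (by positivity) (binomPMF_nonneg (by positivity) hp1)
    _ ≤ _ := binomPMF_mul_le_sum_ite (by positivity) hp1 (by positivity) hq1
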